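/- For n ≥ 2, the number of n × n matrices M with entries in {0, 1, ..., n} such that each row and column of M contains exactly two nonzero entries, each symbol k ∈ {1,...,n} appears exactly twice among the entries of M, and the set of positions of nonzero entries forms an H-cycle, is at least (1/2)·n!·(n−1)!·(2n−3)!/2^(n−2) when additionally the three fixed assignments M(i₁,j₁)=M(i₂,j₂)=1, M(i₂,j₁)=2 are allowed to vary over choices; in particular this quantity exceeds (n!)⁴ for all sufficiently large n. -/

import Mathlib

/-- A set `S ⊆ [n] × [n]` of positions is an H-cycle if for some bijective enumerations
`I J : ZMod n → [n]` it equals `{(i₁,j₁),(i₂,j₁),(i₂,j₂),…,(iₙ,jₙ),(i₁,jₙ)}`. -/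
def IsHCycle (n : ℕ) (S : Set (Fin n × Fin n)) : Prop :=
  ∃ I J : ZMod n → Fin n, Function.Bijective I ∧ Function.Bijective J ∧
    S = {p | ∃ a : ZMod n, p = (I a, J a) ∨ p = (I (a + 1), J a)}

/-- `n × n` matrices with entries in `{0,1,…,n}`, exactly two nonzero entries in each
row and column, each symbol `k ∈ {1,…,n}` appearing exactly twice, whose nonzero
positions form an H-cycle. -/
def goodMatrices (n : ℕ) : Set (Fin n → Fin n → ℕ) :=
  {M | (∀ i j, M i j ≤ n) ∧
    (∀ i, (Finset.univ.filter fun j => M i j ≠ 0).card = 2) ∧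
    (∀ j, (Finset.univ.filter fun i => M i j ≠ 0).card = 2) ∧
    (∀ k, 1 ≤ k → k ≤ n →
      (Finset.univ.filter fun p : Fin n × Fin n => M p.1 p.2 = k).card = 2) ∧
    IsHCycle n {p : Fin n × Fin n | M p.1 p.2 ≠ 0}}

/-!
A pair of bijections `I J : ZMod n ≃ Fin n` and a bijection `β : Fin n × Bool ≃ ZMod n × Bool`,
saying which cell of the H-cycle carries which copy of which symbol, give a good matrix. The
triple is recovered from the matrix together with the cell `(I 1, J 0)`, which fixes where the
cycle starts and in which direction it runs, and with the order of the two cells of each symbol.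
Hence `n!² (2n)! ≤ |good| · 2ⁿ · n²`, and both claims follow by elementary factorial estimates,
the second one through `4ᵐ < m · (2m choose m)`.
-/

open Function Finset Nat

section Extend

variable {α β γ : Type*} [Zero γ] {f : α → β} {g : α → γ}

theorem Function.extend_zero_ne_zero_iff (hg : ∀ a, g a ≠ 0) (b : β) :
    extend f g 0 b ≠ 0 ↔ b ∈ Set.range f := by
  classical
  rw [extend_def]
  split_ifs with h
  · exact iff_of_true (hg _) h
  · exact iff_of_false (fun h' => h' rfl) h

theorem Function.Injective.card_filter_extend_zero_eq [Fintype α] [Fintype β] [DecidableEq γ]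
    (hf : Injective f) {c : γ} (hc : c ≠ 0) :
    #{b | extend f g 0 b = c} = #{a | g a = c} := by
  classical
  rw [← card_map ⟨f, hf⟩]
  congr 1
  ext b
  simp only [mem_filter, mem_univ, true_and, mem_map, Embedding.coeFn_mk]
  constructor
  · intro hb
    obtain ⟨a, rfl⟩ : b ∈ Set.range f := by
      by_contra h
      exact hc (hb ▸ extend_apply' g (0 : β → γ) b fun ⟨a, ha⟩ => h ⟨a, ha⟩)
    exact ⟨a, by rwa [hf.extend_apply] at hb, rfl⟩
  · rintro ⟨a, ha, rfl⟩
    rwa [hf.extend_apply]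

end Extend

section PairOrder

variable {ι α : Type*} [LinearOrder α]

def Equiv.pairOrder (β : ι × Bool ≃ α) (i : ι) : Bool := decide (β (i, false) < β (i, true))

theorem Equiv.eq_of_fst_symm_eq_of_pairOrder_eq {β β' : ι × Bool ≃ α}
    (hfst : ∀ a, (β.symm a).1 = (β'.symm a).1) (hord : β.pairOrder = β'.pairOrder) :
    β = β' := by
  have hpair : ∀ i c, ∃ c', β (i, c) = β' (i, c') := fun i c =>
    ⟨(β'.symm (β (i, c))).2, β'.symm_apply_eq.mp (Prod.ext (by simp [← hfst]) rfl)⟩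
  ext ⟨i, b⟩ : 1
  obtain ⟨c₀, h₀⟩ := hpair i false
  obtain ⟨c₁, h₁⟩ := hpair i true
  have hi := congrFun hord i
  simp only [pairOrder, decide_eq_decide] at hi
  have hne : β (i, false) ≠ β (i, true) := by simp
  have hne' : β' (i, false) ≠ β' (i, true) := by simp
  cases c₀ <;> cases c₁ <;> cases b <;> grind

end PairOrder

section HCycle

variable {n : ℕ}

def hCycleCell (I J : ZMod n ≃ Fin n) : ZMod n × Bool → Fin n × Fin n
  | (a, false) => (I a, J a)
  | (a, true) => (I (a + 1), J a)

theorem mem_range_hCycleCell_iff (I J : ZMod n ≃ Fin n) (i j : Fin n) :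
    (i, j) ∈ Set.range (hCycleCell I J) ↔ I.symm i = J.symm j ∨ I.symm i = J.symm j + 1 := by
  constructor
  · rintro ⟨⟨a, _ | _⟩, h⟩ <;> simp only [hCycleCell, Prod.mk.injEq] at h <;>
      simp [← h.1, ← h.2]
  · rintro (h | h)
    · exact ⟨(J.symm j, false), Prod.ext (by simp [hCycleCell, ← h]) (by simp [hCycleCell])⟩
    · exact ⟨(J.symm j, true), Prod.ext (by simp [hCycleCell, ← h]) (by simp [hCycleCell])⟩

theorem range_hCycleCell (I J : ZMod n ≃ Fin n) :
    Set.range (hCycleCell I J) = {p | ∃ a, p = (I a, J a) ∨ p = (I (a + 1), J a)} := by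
  ext p
  constructor
  · rintro ⟨⟨a, _ | _⟩, rfl⟩
    exacts [⟨a, .inl rfl⟩, ⟨a, .inr rfl⟩]
  · rintro ⟨a, rfl | rfl⟩
    exacts [⟨(a, false), rfl⟩, ⟨(a, true), rfl⟩]

variable [Fact (1 < n)]

theorem ZMod.add_one_ne_self (a : ZMod n) : a + 1 ≠ a := add_ne_left.mpr one_ne_zero

theorem hCycleCell_injective (I J : ZMod n ≃ Fin n) : Injective (hCycleCell I J) := by
  rintro ⟨a, _ | _⟩ ⟨b, _ | _⟩ h <;>
    simp only [hCycleCell, Prod.mk.injEq, EmbeddingLike.apply_eq_iff_eq] at h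
  · rw [h.1]
  · exact absurd (h.1.symm.trans h.2) (ZMod.add_one_ne_self b)
  · exact absurd (h.1.trans h.2.symm) (ZMod.add_one_ne_self a)
  · rw [h.2]

theorem card_filter_mem_range_hCycleCell_row (I J : ZMod n ≃ Fin n) (i : Fin n) :
    #{j | (i, j) ∈ Set.range (hCycleCell I J)} = 2 := by
  have hne : J (I.symm i) ≠ J (I.symm i - 1) := by simp [eq_sub_iff_add_eq]
  rw [← card_pair hne]
  congr 1
  ext j
  simp only [mem_filter, mem_univ, true_and, mem_insert, mem_singleton,
    mem_range_hCycleCell_iff]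
  rw [eq_comm (a := I.symm i), J.symm_apply_eq, eq_comm (a := I.symm i),
    ← eq_sub_iff_add_eq, J.symm_apply_eq]

theorem card_filter_mem_range_hCycleCell_col (I J : ZMod n ≃ Fin n) (j : Fin n) :
    #{i | (i, j) ∈ Set.range (hCycleCell I J)} = 2 := by
  have hne : I (J.symm j) ≠ I (J.symm j + 1) := by simp
  rw [← card_pair hne]
  congr 1
  ext i
  simp only [mem_filter, mem_univ, true_and, mem_insert, mem_singleton,
    mem_range_hCycleCell_iff, I.symm_apply_eq]

theorem eq_of_range_hCycleCell_eq {I J I' J' : ZMod n ≃ Fin n}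
    (h : Set.range (hCycleCell I J) = Set.range (hCycleCell I' J'))
    (hJ : J 0 = J' 0) (hI : I 1 = I' 1) : I = I' ∧ J = J' := by
  -- Follow the cycle: knowing `J a` and `I (a + 1)`, the other cell of row `I (a + 1)` gives
  -- `J (a + 1)`, and then the other cell of column `J (a + 1)` gives `I (a + 1 + 1)`.
  have mem : ∀ e, hCycleCell I J e ∈ Set.range (hCycleCell I' J') := fun e => h ▸ ⟨e, rfl⟩
  have step : ∀ a, J a = J' a → I (a + 1) = I' (a + 1) →
      J (a + 1) = J' (a + 1) ∧ I (a + 1 + 1) = I' (a + 1 + 1) := by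
    intro a hJa hIa
    have hJa1 : J (a + 1) = J' (a + 1) := by
      have := mem (a + 1, false)
      rw [hCycleCell, hIa, mem_range_hCycleCell_iff, I'.symm_apply_apply] at this
      rcases this with h1 | h1
      · exact J'.symm_apply_eq.mp h1.symm
      · rw [add_left_inj, eq_comm, J'.symm_apply_eq, ← hJa, J.apply_eq_iff_eq] at h1
        exact absurd h1 (ZMod.add_one_ne_self a)
    refine ⟨hJa1, ?_⟩
    have := mem (a + 1, true)
    rw [hCycleCell, hJa1, mem_range_hCycleCell_iff, J'.symm_apply_apply] at this
    rcases this with h1 | h1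
    · rw [I'.symm_apply_eq, ← hIa, I.apply_eq_iff_eq] at h1
      exact absurd h1 (ZMod.add_one_ne_self (a + 1))
    · exact I'.symm_apply_eq.mp h1
  have hnat : ∀ k : ℕ, J k = J' k ∧ I (k + 1) = I' (k + 1) := by
    intro k
    induction k with
    | zero => simpa using ⟨hJ, hI⟩
    | succ k ih => simpa using step k ih.1 ih.2
  refine ⟨Equiv.ext fun a => ?_, Equiv.ext fun a => ?_⟩
  · simpa [ZMod.natCast_zmod_val] using (hnat (a - 1).val).2
  · simpa [ZMod.natCast_zmod_val] using (hnat a.val).1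

end HCycle

section Matrix

variable {n : ℕ}

noncomputable def hCycleMatrix (I J : ZMod n ≃ Fin n) (lab : ZMod n × Bool → ℕ) :
    Fin n → Fin n → ℕ :=
  fun i j => extend (hCycleCell I J) lab 0 (i, j)

def pairLabel {α : Type*} (β : Fin n × Bool ≃ α) (a : α) : ℕ := (β.symm a).1 + 1

theorem pairLabel_ne_zero {α : Type*} (β : Fin n × Bool ≃ α) (a : α) : pairLabel β a ≠ 0 :=
  Nat.succ_ne_zero _

theorem pairLabel_le {α : Type*} (β : Fin n × Bool ≃ α) (a : α) : pairLabel β a ≤ n :=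
  (β.symm a).1.isLt

theorem card_filter_pairLabel_eq {α : Type*} [Fintype α] [DecidableEq α] (β : Fin n × Bool ≃ α)
    {k : ℕ} (hk₀ : 1 ≤ k) (hk : k ≤ n) : #{a | pairLabel β a = k} = 2 := by
  let i : Fin n := ⟨k - 1, by omega⟩
  rw [← card_pair (show β (i, false) ≠ β (i, true) by simp)]
  congr 1
  ext a
  simp only [mem_filter, mem_univ, true_and, mem_insert, mem_singleton]
  obtain ⟨⟨j, b⟩, rfl⟩ := β.surjective a
  cases b <;> simp [pairLabel, i, Fin.ext_iff] <;> omega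

theorem setOf_hCycleMatrix_ne_zero (I J : ZMod n ≃ Fin n) {lab : ZMod n × Bool → ℕ}
    (hlab : ∀ e, lab e ≠ 0) :
    {p : Fin n × Fin n | hCycleMatrix I J lab p.1 p.2 ≠ 0} = Set.range (hCycleCell I J) := by
  ext p
  exact extend_zero_ne_zero_iff hlab p

variable [Fact (1 < n)]

theorem hCycleMatrix_apply_cell (I J : ZMod n ≃ Fin n) (lab : ZMod n × Bool → ℕ)
    (e : ZMod n × Bool) :
    hCycleMatrix I J lab (hCycleCell I J e).1 (hCycleCell I J e).2 = lab e :=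
  (hCycleCell_injective I J).extend_apply lab 0 e

theorem hCycleMatrix_mem_goodMatrices (I J : ZMod n ≃ Fin n)
    (β : Fin n × Bool ≃ ZMod n × Bool) :
    hCycleMatrix I J (pairLabel β) ∈ goodMatrices n := by
  have hsupp : ∀ i j, hCycleMatrix I J (pairLabel β) i j ≠ 0 ↔
      (i, j) ∈ Set.range (hCycleCell I J) := fun i j =>
    extend_zero_ne_zero_iff (pairLabel_ne_zero β) (i, j)
  refine ⟨fun i j => ?_, fun i => ?_, fun j => ?_, fun k hk₀ hk => ?_, ?_⟩
  · rw [hCycleMatrix, extend_def]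
    split_ifs
    exacts [pairLabel_le β _, Nat.zero_le n]
  · simpa only [hsupp] using card_filter_mem_range_hCycleCell_row I J i
  · simpa only [hsupp] using card_filter_mem_range_hCycleCell_col I J j
  · rw [← card_filter_pairLabel_eq β hk₀ hk]
    exact (hCycleCell_injective I J).card_filter_extend_zero_eq (by omega)
  · refine ⟨I, J, I.bijective, J.bijective, ?_⟩
    rw [setOf_hCycleMatrix_ne_zero I J (pairLabel_ne_zero β), range_hCycleCell]

theorem eq_of_hCycleMatrix_eq {I J I' J' : ZMod n ≃ Fin n} {lab lab' : ZMod n × Bool → ℕ}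
    (hlab : ∀ e, lab e ≠ 0) (hlab' : ∀ e, lab' e ≠ 0)
    (hM : hCycleMatrix I J lab = hCycleMatrix I' J' lab') (hJ : J 0 = J' 0) (hI : I 1 = I' 1) :
    I = I' ∧ J = J' ∧ lab = lab' := by
  have hrange : Set.range (hCycleCell I J) = Set.range (hCycleCell I' J') := by
    rw [← setOf_hCycleMatrix_ne_zero I J hlab, hM, setOf_hCycleMatrix_ne_zero I' J' hlab']
  obtain ⟨rfl, rfl⟩ := eq_of_range_hCycleCell_eq hrange hJ hI
  refine ⟨rfl, rfl, funext fun e => ?_⟩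
  rw [← hCycleMatrix_apply_cell I J lab e, hM, hCycleMatrix_apply_cell]

end Matrix

theorem eq_of_pairLabel_eq {n : ℕ} {α γ : Type*} [LinearOrder γ] (κ : α ≃ γ)
    {β β' : Fin n × Bool ≃ α} (h : pairLabel β = pairLabel β')
    (hord : (β.trans κ).pairOrder = (β'.trans κ).pairOrder) : β = β' := by
  have hfst : ∀ a, ((β.trans κ).symm a).1 = ((β'.trans κ).symm a).1 := fun a =>
    Fin.ext (Nat.succ_injective (congrFun h (κ.symm a)))
  have := Equiv.eq_of_fst_symm_eq_of_pairOrder_eq hfst hord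
  exact Equiv.ext fun x => κ.injective (DFunLike.congr_fun this x)

theorem factorial_sq_mul_factorial_le_ncard_goodMatrices {n : ℕ} (hn : 2 ≤ n) :
    n ! ^ 2 * (2 * n)! ≤ (goodMatrices n).ncard * 2 ^ n * n ^ 2 := by
  have : Fact (1 < n) := ⟨hn⟩
  have : Finite (goodMatrices n) :=
    ((Set.finite_Iic fun _ _ => n).subset fun M hM => hM.1).to_subtype
  -- `κ` only serves to put a linear order on the cells.
  let κ := Fintype.equivFin (ZMod n × Bool)
  let G : (ZMod n ≃ Fin n) × (ZMod n ≃ Fin n) × (Fin n × Bool ≃ ZMod n × Bool) →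
      goodMatrices n × (Fin n → Bool) × (Fin n × Fin n) := fun ⟨I, J, β⟩ =>
    (⟨_, hCycleMatrix_mem_goodMatrices I J β⟩, (β.trans κ).pairOrder, (I 1, J 0))
  have hG : Injective G := by
    rintro ⟨I, J, β⟩ ⟨I', J', β'⟩ h
    simp only [G, Prod.mk.injEq, Subtype.mk.injEq] at h
    obtain ⟨hM, hord, hI, hJ⟩ := h
    obtain ⟨rfl, rfl, hlab⟩ :=
      eq_of_hCycleMatrix_eq (pairLabel_ne_zero β) (pairLabel_ne_zero β') hM hJ hI
    rw [eq_of_pairLabel_eq κ hlab hord]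
  have hcard := Nat.card_le_card_of_injective G hG
  let e : Fin n ≃ ZMod n := (ZMod.finEquiv n).toEquiv
  rw [Nat.card_prod, Nat.card_prod, Nat.card_prod, Nat.card_prod, Nat.card_coe_set_eq] at hcard
  simp only [Nat.card_eq_fintype_card, Fintype.card_equiv e.symm,
    Fintype.card_equiv (e.prodCongr (Equiv.refl Bool)), ZMod.card, Fintype.card_fin,
    Fintype.card_fun, Fintype.card_bool, Fintype.card_prod] at hcard
  rw [mul_comm n 2] at hcard
  simpa only [sq, mul_assoc] using hcard

theorem pow_three_le_two_pow {m : ℕ} (hm : 10 ≤ m) : m ^ 3 ≤ 2 ^ m := by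
  induction m, hm using Nat.le_induction with
  | base => norm_num
  | succ k hk ih =>
    have : 10 * k ^ 2 ≤ k ^ 3 := by rw [pow_succ' k 2]; exact Nat.mul_le_mul_right _ hk
    calc (k + 1) ^ 3 ≤ 2 * k ^ 3 := by nlinarith
      _ ≤ 2 ^ (k + 1) := by rw [pow_succ 2 k]; omega

theorem two_mul_sq_mul_factorial_le {n : ℕ} (hn : 2 ≤ n) :
    2 * n ^ 2 * (n ! * (n - 1)! * (2 * n - 3)!) ≤ n ! ^ 2 * (2 * n)! := by
  obtain ⟨m, rfl⟩ : ∃ m, n = m + 2 := ⟨n - 2, by omega⟩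
  rw [show 2 * (m + 2) - 3 = 2 * m + 1 by omega, show m + 2 - 1 = m + 1 by omega,
    show 2 * (m + 2) = 2 * m + 1 + 3 by ring, Nat.factorial_succ (m + 1),
    Nat.factorial_succ (2 * m + 1 + 2), Nat.factorial_succ (2 * m + 1 + 1),
    Nat.factorial_succ (2 * m + 1)]
  calc _ = ((m + 2) * (m + 1)!) ^ 2 * ((2 * m + 4) * (2 * m + 1)!) := by ring
    _ ≤ ((m + 2) * (m + 1)!) ^ 2 *
        ((2 * m + 4) * ((2 * m + 3) * ((2 * m + 2) * (2 * m + 1)!))) := by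
      gcongr
      exact Nat.le_mul_of_pos_left _ (by positivity) |>.trans
        (Nat.le_mul_of_pos_left _ (by positivity))
    _ = _ := by ring

theorem factorial_sq_mul_two_pow_mul_sq_lt {m : ℕ} (hm : 10 ≤ m) :
    m ! ^ 2 * 2 ^ m * m ^ 2 < (2 * m)! := by
  have hcentral : m.centralBinom * m ! ^ 2 = (2 * m)! := by
    rw [Nat.centralBinom_eq_two_mul_choose, two_mul, sq, ← mul_assoc,
      Nat.add_choose_mul_factorial_mul_factorial]
  refine Nat.lt_of_mul_lt_mul_right (a := 2 ^ m) ?_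
  calc m ! ^ 2 * 2 ^ m * m ^ 2 * 2 ^ m = m ! ^ 2 * m ^ 2 * 4 ^ m := by
        rw [show (4 : ℕ) = 2 * 2 by rfl, mul_pow]; ring
    _ < m ! ^ 2 * m ^ 2 * (m * m.centralBinom) := by
      gcongr
      exact Nat.four_pow_lt_mul_centralBinom m (by omega)
    _ = (2 * m)! * m ^ 3 := by rw [← hcentral]; ring
    _ ≤ (2 * m)! * 2 ^ m := Nat.mul_le_mul_left _ (pow_three_le_two_pow hm)

/-- The number of such matrices is at least `(1/2)·n!·(n−1)!·(2n−3)!/2^(n−2)`,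
i.e. `n!·(n−1)!·(2n−3)!/2^(n−1)`; in particular it exceeds `(n!)⁴` for all
sufficiently large `n`. -/
theorem stmt18 (n : ℕ) (hn : 2 ≤ n) :
    Nat.factorial n * Nat.factorial (n - 1) * Nat.factorial (2 * n - 3) ≤
      (goodMatrices n).ncard * 2 ^ (n - 1) ∧
    ∃ N : ℕ, ∀ m : ℕ, N ≤ m → (Nat.factorial m) ^ 4 < (goodMatrices m).ncard := by
  refine ⟨?_, 10, fun m hm => ?_⟩
  · have hpow : 2 ^ n = 2 * 2 ^ (n - 1) := by rw [← pow_succ']; congr 1; omega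
    refine Nat.le_of_mul_le_mul_left (c := 2 * n ^ 2) ?_ (by positivity)
    calc 2 * n ^ 2 * (n ! * (n - 1)! * (2 * n - 3)!) ≤ n ! ^ 2 * (2 * n)! :=
          two_mul_sq_mul_factorial_le hn
      _ ≤ (goodMatrices n).ncard * 2 ^ n * n ^ 2 :=
          factorial_sq_mul_factorial_le_ncard_goodMatrices hn
      _ = 2 * n ^ 2 * ((goodMatrices n).ncard * 2 ^ (n - 1)) := by rw [hpow]; ring
  · refine Nat.lt_of_mul_lt_mul_right (a := 2 ^ m * m ^ 2) ?_
    calc m ! ^ 4 * (2 ^ m * m ^ 2) = m ! ^ 2 * (m ! ^ 2 * 2 ^ m * m ^ 2) := by ring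
      _ < m ! ^ 2 * (2 * m)! :=
          Nat.mul_lt_mul_of_pos_left (factorial_sq_mul_two_pow_mul_sq_lt hm) (by positivity)
      _ ≤ (goodMatrices m).ncard * (2 ^ m * m ^ 2) := by
          rw [← mul_assoc]; exact factorial_sq_mul_factorial_le_ncard_goodMatrices (by omega)
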